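/- arXiv:2206.07116 — 4 statements merged into one kernel-verified Lean document; each statement's English description precedes it below -/
import Mathlib

section
/- Let Γ be a finite strongly connected digraph of uniform outdegree, d the gcd of lengths of all its cycles, and fix any deterministic coloring. If the length of some path from vertex p to vertex q is not congruent to 0 modulo d, then for every word s over the colors, ps ≠ qs. -/
def Adj {V : Type*} (E : V → Multiset V) (p q : V) : Prop := q ∈ E p

def StronglyConnected {V : Type*} (E : V → Multiset V) : Prop :=
  ∀ p q : V, Relation.ReflTransGen (Adj E) p q

def HasCycle {V : Type*} (E : V → Multiset V) (n : ℕ) : Prop :=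
  0 < n ∧ ∃ c : ZMod n → V, ∀ i, c (i + 1) ∈ E (c i)

def CycleGcd {V : Type*} (E : V → Multiset V) (k : ℕ) : Prop :=
  (∀ n, HasCycle E n → k ∣ n) ∧ ∀ m, (∀ n, HasCycle E n → m ∣ n) → m ∣ k

def IsColoring {V : Type*} {d : ℕ} (E : V → Multiset V) (δ : V → Fin d → V) : Prop :=
  ∀ v, (List.ofFn (δ v) : Multiset V) = E v

def run {V A : Type*} (δ : V → A → V) (p : V) (s : List A) : V :=
  s.foldl δ p

def wordImage {V A : Type*} [Fintype V] [DecidableEq V] (δ : V → A → V) (s : List A) : Finset V :=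
  Finset.univ.image (fun p => run δ p s)

def IsPathLen {V : Type*} (E : V → Multiset V) (p q : V) (n : ℕ) : Prop :=
  ∃ c : Fin (n + 1) → V, c 0 = p ∧ c (Fin.last n) = q ∧
    ∀ i : Fin n, c i.succ ∈ E (c i.castSucc)

def SyncPair {V A : Type*} (δ : V → A → V) (p q : V) : Prop :=
  ∃ s : List A, run δ p s = run δ q s

def StablePair {V A : Type*} (δ : V → A → V) (p q : V) : Prop :=
  ∀ u : List A, SyncPair δ (run δ p u) (run δ q u)

def DeadlockPair {V A : Type*} (δ : V → A → V) (p q : V) : Prop :=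
  ∀ s : List A, run δ p s ≠ run δ q s

def IsFClique {V A : Type*} [Fintype V] [DecidableEq V] (δ : V → A → V) (F : Finset V) : Prop :=
  (∀ p ∈ F, ∀ q ∈ F, p ≠ q → DeadlockPair δ p q) ∧
  ∀ G : Finset V, (∀ p ∈ G, ∀ q ∈ G, p ≠ q → DeadlockPair δ p q) → G.card ≤ F.card

noncomputable def levelOf {V : Type*} (f : V → V) (v : V) : ℕ :=
  sInf {n | ∃ m, 0 < m ∧ f^[m] (f^[n] v) = f^[n] v}

noncomputable def rootOf {V : Type*} (f : V → V) (v : V) : V := f^[levelOf f v] v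

noncomputable def maxLevel {V : Type*} [Fintype V] (f : V → V) : ℕ :=
  Finset.univ.sup (levelOf f)

def UniqueMaxTree {V : Type*} [Fintype V] (f : V → V) : Prop :=
  0 < maxLevel f ∧ ∃ r : V, ∀ v : V, levelOf f v = maxLevel f → rootOf f v = r

def HasCycleIn {V : Type*} (E : V → Multiset V) (S : Finset V) (n : ℕ) : Prop :=
  0 < n ∧ ∃ c : ZMod n → V, (∀ i, c i ∈ S) ∧ ∀ i, c (i + 1) ∈ E (c i)

def CycleGcdIn {V : Type*} (E : V → Multiset V) (S : Finset V) (k : ℕ) : Prop :=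
  (∀ n, HasCycleIn E S n → k ∣ n) ∧ ∀ m, (∀ n, HasCycleIn E S n → m ∣ n) → m ∣ k

/-!
Fix a root `p`. By strong connectivity every vertex `v` is reached from `p`, and since every
closed walk has length divisible by `d`, the length of a walk from `p` to `v` is well defined
modulo `d`. This level map `f : V → ZMod d` satisfies `f w = f u + 1` along every edge. A word `s`
is a walk of length `s.length` from every state, so `f (run δ p s) - f (run δ q s) = f p - f q`,
which is `-n ≠ 0` in `ZMod d`.
-/

inductive Walk {V : Type*} (E : V → Multiset V) : V → V → ℕ → Prop
  | refl (a : V) : Walk E a a 0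
  | tail {a b c : V} {n : ℕ} : Walk E a b n → Adj E b c → Walk E a c (n + 1)

namespace Walk

variable {V : Type*} {E : V → Multiset V} {a b c : V} {m n : ℕ}

theorem trans (h₁ : Walk E a b m) (h₂ : Walk E b c n) : Walk E a c (m + n) := by
  induction h₂ with
  | refl => exact h₁
  | tail _ e ih => exact ih.tail e

theorem exists_of_reflTransGen (h : Relation.ReflTransGen (Adj E) a b) : ∃ n, Walk E a b n := by
  induction h with
  | refl => exact ⟨0, refl a⟩
  | tail _ e ih =>
    obtain ⟨n, w⟩ := ih
    exact ⟨n + 1, w.tail e⟩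

theorem of_isPathLen (h : IsPathLen E a b n) : Walk E a b n := by
  obtain ⟨c, rfl, rfl, hc⟩ := h
  suffices ∀ k (hk : k ≤ n), Walk E (c 0) (c ⟨k, Nat.lt_succ_of_le hk⟩) k from this n le_rfl
  intro k hk
  induction k with
  | zero => exact refl _
  | succ k ih => exact (ih (by omega)).tail (hc ⟨k, hk⟩)

theorem isPathLen (h : Walk E a b n) : IsPathLen E a b n := by
  induction h with
  | refl => exact ⟨fun _ => a, rfl, rfl, nofun⟩
  | @tail x y k _ e ih =>
    obtain ⟨v, hv₀, hvn, hv⟩ := ih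
    refine ⟨Fin.snoc v y, by simpa using hv₀, by simp, fun i => ?_⟩
    induction i using Fin.lastCases with
    | last => rwa [Fin.succ_last, Fin.snoc_last, Fin.snoc_castSucc, hvn]
    | cast j => rw [Fin.succ_castSucc, Fin.snoc_castSucc, Fin.snoc_castSucc]; exact hv j

theorem hasCycle (h : Walk E a a (n + 1)) : HasCycle E (n + 1) := by
  obtain ⟨v, hv₀, hvn, hv⟩ := h.isPathLen
  have hstep (i : Fin (n + 1)) : v (i + 1).castSucc ∈ E (v i.castSucc) := by
    induction i using Fin.lastCases with
    | last => rw [Fin.last_add_one, Fin.castSucc_zero, hv₀, ← hvn]; exact hv (Fin.last n)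
    | cast j => rw [Fin.coeSucc_eq_succ, ← Fin.succ_castSucc]; exact hv j.castSucc
  exact ⟨n.succ_pos, fun i : Fin (n + 1) => v i.castSucc, hstep⟩

theorem cycleGcd_dvd {d : ℕ} (hgcd : CycleGcd E d) (h : Walk E a a n) : d ∣ n := by
  cases n with
  | zero => exact dvd_zero d
  | succ n => exact hgcd.1 _ h.hasCycle

theorem map_eq_add {R : Type*} [AddMonoidWithOne R] {f : V → R}
    (hf : ∀ u w, Adj E u w → f w = f u + 1) (h : Walk E a b n) : f b = f a + n := by
  induction h with
  | refl => simp
  | tail _ e ih => rw [hf _ _ e, ih, Nat.cast_succ, add_assoc]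

end Walk

section Level

variable {V : Type*} {E : V → Multiset V} {d : ℕ}

/-- Close both walks up by a common return walk from `b` to `a`. -/
theorem Walk.natCast_eq_of_stronglyConnected (hsc : StronglyConnected E) (hgcd : CycleGcd E d)
    {a b : V} {m n : ℕ} (hm : Walk E a b m) (hn : Walk E a b n) : (m : ZMod d) = n := by
  obtain ⟨k, hk⟩ := Walk.exists_of_reflTransGen (hsc b a)
  have hmk := (ZMod.natCast_eq_zero_iff _ d).mpr ((hm.trans hk).cycleGcd_dvd hgcd)
  have hnk := (ZMod.natCast_eq_zero_iff _ d).mpr ((hn.trans hk).cycleGcd_dvd hgcd)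
  push_cast at hmk hnk
  exact add_right_cancel (hmk.trans hnk.symm)

theorem exists_level_of_stronglyConnected (hsc : StronglyConnected E) (hgcd : CycleGcd E d)
    (p : V) : ∃ f : V → ZMod d, ∀ u w, Adj E u w → f w = f u + 1 := by
  choose len hlen using fun v => Walk.exists_of_reflTransGen (hsc p v)
  refine ⟨fun v => len v, fun u w e => ?_⟩
  dsimp only
  rw [Walk.natCast_eq_of_stronglyConnected hsc hgcd (hlen w) ((hlen u).tail e), Nat.cast_succ]

end Level

namespace IsColoring

variable {V : Type*} {k : ℕ} {E : V → Multiset V} {δ : V → Fin k → V}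

theorem adj (hδ : IsColoring E δ) (u : V) (a : Fin k) : Adj E u (δ u a) := by
  rw [Adj, ← hδ u]
  exact Multiset.mem_coe.mpr (List.mem_ofFn.mpr ⟨a, rfl⟩)

theorem walk_run (hδ : IsColoring E δ) (u : V) (s : List (Fin k)) :
    Walk E u (run δ u s) s.length := by
  induction s using List.reverseRecOn with
  | nil => exact Walk.refl u
  | append_singleton s a ih => simpa [run] using ih.tail (hδ.adj _ a)

end IsColoring

theorem stmt2_general {V : Type*} {d dcol : ℕ}
    (E : V → Multiset V)
    (hsc : StronglyConnected E)
    (hgcd : CycleGcd E d)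
    (δ : V → Fin dcol → V) (hδ : IsColoring E δ)
    (p q : V) (n : ℕ)
    (hpath : IsPathLen E p q n) (hn : ¬ d ∣ n) :
    ∀ s : List (Fin dcol), run δ p s ≠ run δ q s := by
  intro s hs
  obtain ⟨f, hf⟩ := exists_level_of_stronglyConnected hsc hgcd p
  have hq := (Walk.of_isPathLen hpath).map_eq_add hf
  have hps := (hδ.walk_run p s).map_eq_add hf
  have hqs := (hδ.walk_run q s).map_eq_add hf
  rw [hs, hqs, hq, add_right_comm] at hps
  exact hn ((ZMod.natCast_eq_zero_iff n d).mp (add_eq_left.mp hps))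

/-- if some path from p to q has length not divisible by d (the gcd of
cycle lengths), then for every word s over the colors, ps ≠ qs. -/
theorem stmt2 {V : Type*} [Fintype V] {d dcol : ℕ}
    (E : V → Multiset V)
    (hsc : StronglyConnected E)
    (hgcd : CycleGcd E d)
    (δ : V → Fin dcol → V) (hδ : IsColoring E δ)
    (p q : V) (n : ℕ)
    (hpath : IsPathLen E p q n) (hn : ¬ d ∣ n) :
    ∀ s : List (Fin dcol), run δ p s ≠ run δ q s :=
  stmt2_general E hsc hgcd δ hδ p q n hpath hn
end

section
/- Let A be a deterministic finite automaton with strongly connected transition graph, and let F be an F-clique (a maximum-size set of states in which every pair of distinct states is a deadlock). Then for every word s, the set Fs is also an F-clique (in particular |Fs| = |F|). -/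
/-! A word never merges the two states of a deadlock pair, so it maps an F-clique injectively.
Images of deadlock pairs are again deadlock pairs, since each continuation `t` of `s` is
the word `s ++ t` applied to the original pair. Maximality carries over because the
cardinality is unchanged. -/

theorem run_append {V A : Type*} (δ : V → A → V) (p : V) (s t : List A) :
    run δ p (s ++ t) = run δ (run δ p s) t :=
  List.foldl_append

theorem DeadlockPair.run {V A : Type*} {δ : V → A → V} {p q : V} (h : DeadlockPair δ p q)
    (s : List A) : DeadlockPair δ (run δ p s) (run δ q s) := fun t => by
  simpa only [run_append] using h (s ++ t)

namespace IsFClique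

variable {V A : Type*} [Fintype V] [DecidableEq V] {δ : V → A → V} {F : Finset V}

theorem injOn_run (hF : IsFClique δ F) (s : List A) : Set.InjOn (fun p => run δ p s) F :=
  fun p hp q hq hpq => by_contra fun hne => hF.1 p hp q hq hne s hpq

theorem card_image_run (hF : IsFClique δ F) (s : List A) :
    (F.image (fun p => run δ p s)).card = F.card :=
  Finset.card_image_of_injOn (hF.injOn_run s)

theorem image_run (hF : IsFClique δ F) (s : List A) :
    IsFClique δ (F.image (fun p => run δ p s)) := by
  refine ⟨?_, fun G hG => hF.card_image_run s ▸ hF.2 G hG⟩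
  simp only [Finset.mem_image]
  rintro _ ⟨p, hp, rfl⟩ _ ⟨q, hq, rfl⟩ hne
  exact (hF.1 p hp q hq fun h => hne (h ▸ rfl)).run s

end IsFClique

theorem stmt4_general {V A : Type*} [Fintype V] [DecidableEq V]
    (δ : V → A → V)
    (F : Finset V) (hF : IsFClique δ F) (s : List A) :
    IsFClique δ (F.image (fun p => run δ p s)) ∧
    (F.image (fun p => run δ p s)).card = F.card :=
  ⟨hF.image_run s, hF.card_image_run s⟩

/-- the image of an F-clique under any word is again an F-clique,
of the same cardinality. -/
theorem stmt4 {V A : Type*} [Fintype V] [DecidableEq V]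
    (δ : V → A → V)
    (hsc : ∀ p q : V, ∃ s : List A, run δ p s = q)
    (F : Finset V) (hF : IsFClique δ F) (s : List A) :
    IsFClique δ (F.image (fun p => run δ p s)) ∧
    (F.image (fun p => run δ p s)).card = F.card :=
  stmt4_general δ F hF s
end

section
/- Let S be a spanning 1-outregular subgraph (every vertex has exactly one outgoing edge in S) of a finite digraph Γ, colored with a single color α along with any deterministic extension. Let N be the set of vertices of level n in some tree of S. Then for every F-clique F of the resulting automaton, |F ∩ N| ≤ 1. -/
theorem run_replicate_eq_iterate {V A : Type*} (δ : V → A → V) (a : A) (f : V → V)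
    (hf : ∀ v, δ v a = f v) (n : ℕ) (v : V) :
    run δ v (List.replicate n a) = f^[n] v := by
  induction n generalizing v with
  | zero => rfl
  | succ k ih =>
    change run δ (δ v a) (List.replicate k a) = f^[k + 1] v
    rw [ih, hf, Function.iterate_succ_apply]

theorem iterate_levelOf_eq_rootOf {V : Type*} (f : V → V) {v : V} {n : ℕ}
    (hv : levelOf f v = n) : f^[n] v = rootOf f v := by
  rw [rootOf, hv]

theorem syncPair_of_levelOf_eq_of_rootOf_eq {V A : Type*} (δ : V → A → V) (a : A) (f : V → V)
    (hf : ∀ v, δ v a = f v) {p q : V} {n : ℕ} (hp : levelOf f p = n) (hq : levelOf f q = n)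
    (hroot : rootOf f p = rootOf f q) : SyncPair δ p q :=
  ⟨List.replicate n a, by
    rw [run_replicate_eq_iterate δ a f hf, run_replicate_eq_iterate δ a f hf,
      iterate_levelOf_eq_rootOf f hp, iterate_levelOf_eq_rootOf f hq, hroot]⟩

theorem stmt8_general {V : Type*} [Fintype V] [DecidableEq V] {d : ℕ}
    (δ : V → Fin d → V)
    (α : Fin d) (f : V → V) (hf : ∀ v, δ v α = f v)
    (n : ℕ) (r : V)
    (F : Finset V) (hF : IsFClique δ F) :
    (F ∩ (Finset.univ.filter (fun v => levelOf f v = n ∧ rootOf f v = r))).card ≤ 1 := by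
  refine Finset.card_le_one.mpr fun p hp q hq => ?_
  simp only [Finset.mem_inter, Finset.mem_filter, Finset.mem_univ, true_and] at hp hq
  obtain ⟨hpF, hp_level, hp_root⟩ := hp
  obtain ⟨hqF, hq_level, hq_root⟩ := hq
  by_contra hne
  obtain ⟨s, hs⟩ := syncPair_of_levelOf_eq_of_rootOf_eq δ α f hf hp_level hq_level
    (hp_root.trans hq_root.symm)
  exact hF.1 p hpF q hqF hne s hs

/-- an F-clique meets the set of vertices of a given level in a given
tree of a 1-outregular spanning subgraph (colored by α) in at most one vertex. -/
theorem stmt8 {V : Type*} [Fintype V] [DecidableEq V] {d : ℕ}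
    (E : V → Multiset V)
    (δ : V → Fin d → V) (hδ : IsColoring E δ)
    (α : Fin d) (f : V → V) (hf : ∀ v, δ v α = f v)
    (n : ℕ) (r : V)
    (F : Finset V) (hF : IsFClique δ F) :
    (F ∩ (Finset.univ.filter (fun v => levelOf f v = n ∧ rootOf f v = r))).card ≤ 1 :=
  stmt8_general δ α f hf n r F hF
end

section
/- Let Γ be a d-periodic finite strongly connected digraph that has a 1-outregular spanning subgraph R consisting solely of disjoint cycles (no trees). Then either Γ is a cycle of length d of bunches, or Γ has another 1-outregular spanning subgraph with exactly one maximal tree. -/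
/-!
If every vertex sends its whole bunch to its image under the permutation `f`, strong
connectivity forces `f` to be a single cycle through all vertices; every cycle of the graph then
winds around it, so its length is the period `d` and the graph is a cycle of bunches.
Otherwise some `v` has an edge to `u ≠ f v`. Redirecting `v` to `u` gives a map whose range
misses exactly `f v`; every other non-cyclic vertex has a preimage of strictly higher level, so
`f v` alone attains the maximal level and its tree is the unique maximal one.
-/

open Function

section Level

variable {V : Type*} {f : V → V} {v : V}

lemma levelOf_eq_sInf (f : V → V) (v : V) :
    levelOf f v = sInf {n | f^[n] v ∈ periodicPts f} := rfl

lemma exists_iterate_mem_periodicPts [Finite V] (f : V → V) (v : V) :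
    ∃ n, f^[n] v ∈ periodicPts f := by
  obtain ⟨a, b, hab, h⟩ := Finite.exists_ne_map_eq_of_infinite (fun k : ℕ => f^[k] v)
  wlog hlt : a < b generalizing a b
  · exact this b a hab.symm h.symm (by omega)
  refine ⟨a, mk_mem_periodicPts (n := b - a) (by omega) ?_⟩
  rw [IsPeriodicPt, IsFixedPt, ← iterate_add_apply, Nat.sub_add_cancel hlt.le]
  exact h.symm

lemma levelOf_eq_zero_iff [Finite V] : levelOf f v = 0 ↔ v ∈ periodicPts f := by
  rw [levelOf_eq_sInf, Nat.sInf_eq_zero]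
  simp [Set.eq_empty_iff_forall_notMem, exists_iterate_mem_periodicPts]

lemma levelOf_eq_levelOf_apply_add_one [Finite V] (hv : v ∉ periodicPts f) :
    levelOf f v = levelOf f (f v) + 1 := by
  have hpos : 1 ≤ levelOf f v := Nat.one_le_iff_ne_zero.mpr (mt levelOf_eq_zero_iff.mp hv)
  rw [levelOf_eq_sInf] at hpos ⊢
  simp only [levelOf_eq_sInf, ← iterate_succ_apply]
  exact (Nat.sInf_add hpos).symm

lemma levelOf_lt_maxLevel_of_mem_range [Fintype V] (hv : v ∈ Set.range f)
    (hper : v ∉ periodicPts f) : levelOf f v < maxLevel f := by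
  obtain ⟨y, rfl⟩ := hv
  have hy : y ∉ periodicPts f := fun hy => hper ((bijOn_periodicPts f).mapsTo hy)
  have hle : levelOf f y ≤ maxLevel f := Finset.le_sup (Finset.mem_univ y)
  rw [levelOf_eq_levelOf_apply_add_one hy] at hle
  omega

lemma uniqueMaxTree_of_range_eq_compl_singleton [Fintype V] {w : V}
    (h : Set.range f = {w}ᶜ) : UniqueMaxTree f := by
  have hw : w ∉ periodicPts f := fun hw => by simpa [h] using periodicPts_subset_range hw
  have hmax_pos : 0 < maxLevel f :=
    (Nat.pos_of_ne_zero (mt levelOf_eq_zero_iff.mp hw)).trans_le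
      (Finset.le_sup (Finset.mem_univ w))
  refine ⟨hmax_pos, rootOf f w, fun x hx => ?_⟩
  obtain rfl : x = w := by
    by_contra hxw
    have hx_range : x ∈ Set.range f := by rw [h]; exact hxw
    have hx_per : x ∉ periodicPts f := fun hper => by
      rw [← levelOf_eq_zero_iff] at hper; omega
    exact (levelOf_lt_maxLevel_of_mem_range hx_range hx_per).ne hx
  rfl

end Level

lemma range_update_of_bijective {V : Type*} [DecidableEq V] {f : V → V} (hf : Bijective f)
    {v u : V} (hu : u ≠ f v) : Set.range (update f v u) = {f v}ᶜ := by
  ext x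
  simp only [Set.mem_range, Set.mem_compl_singleton_iff]
  constructor
  · rintro ⟨y, rfl⟩
    rcases eq_or_ne y v with rfl | hy
    · simpa using hu
    · simpa [update_of_ne hy] using hf.1.ne hy
  · intro hx
    obtain ⟨y, rfl⟩ := hf.2 x
    exact ⟨y, by rw [update_of_ne (by rintro rfl; exact hx rfl)]⟩

section Bunches

variable {V : Type*} {E : V → Multiset V} {f : V → V}

lemma exists_iterate_eq_of_reflTransGen (hb : ∀ v, ∀ x ∈ E v, x = f v) {p q : V}
    (h : Relation.ReflTransGen (Adj E) p q) : ∃ k, f^[k] p = q := by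
  induction h with
  | refl => exact ⟨0, rfl⟩
  | tail _ hadj ih =>
    obtain ⟨k, rfl⟩ := ih
    exact ⟨k + 1, by rw [iterate_succ_apply', hb _ _ hadj]⟩

lemma HasCycle.exists_isPeriodicPt (hb : ∀ v, ∀ x ∈ E v, x = f v) {n : ℕ}
    (h : HasCycle E n) : ∃ x, IsPeriodicPt f n x := by
  obtain ⟨-, c, hc⟩ := h
  have hiter : ∀ k : ℕ, c k = f^[k] (c 0) := by
    intro k
    induction k with
    | zero => simp
    | succ k ih => rw [Nat.cast_succ, hb _ _ (hc k), ih, iterate_succ_apply']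
  exact ⟨c 0, by rw [IsPeriodicPt, IsFixedPt, ← hiter, ZMod.natCast_self]⟩

lemma hasCycle_minimalPeriod (hf : ∀ v, f v ∈ E v) {x : V} (hx : x ∈ periodicPts f) :
    HasCycle E (minimalPeriod f x) := by
  have hpos := minimalPeriod_pos_of_mem_periodicPts hx
  have : NeZero (minimalPeriod f x) := ⟨hpos.ne'⟩
  refine ⟨hpos, fun i => f^[i.val] x, fun i => ?_⟩
  have hval : (i + 1).val = (i.val + 1) % minimalPeriod f x := by
    rw [← ZMod.val_natCast, Nat.cast_succ, ZMod.natCast_zmod_val]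
  simpa only [hval, iterate_mod_minimalPeriod_eq, iterate_succ_apply'] using hf _

lemma card_eq_minimalPeriod [Fintype V] {x : V} (hx : x ∈ periodicPts f)
    (hsurj : ∀ y, ∃ k, f^[k] x = y) : Fintype.card V = minimalPeriod f x := by
  have hpos := minimalPeriod_pos_of_mem_periodicPts hx
  have hbij : Bijective (fun k : Fin (minimalPeriod f x) => f^[k] x) := by
    refine ⟨fun a b hab => Fin.ext (iterate_injOn_Iio_minimalPeriod a.2 b.2 hab), fun y => ?_⟩
    obtain ⟨k, rfl⟩ := hsurj y
    exact ⟨⟨k % minimalPeriod f x, Nat.mod_lt k hpos⟩, iterate_mod_minimalPeriod_eq⟩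
  simpa using (Fintype.card_of_bijective hbij).symm

lemma card_eq_of_cycleGcd_of_bunches [Fintype V] [Nonempty V] {d : ℕ}
    (hsc : StronglyConnected E) (hgcd : CycleGcd E d) (hf : ∀ v, f v ∈ E v)
    (hinj : Injective f) (hb : ∀ v, ∀ x ∈ E v, x = f v) : Fintype.card V = d := by
  obtain ⟨v₀⟩ := ‹Nonempty V›
  have hv₀ : v₀ ∈ periodicPts f := hinj.mem_periodicPts v₀
  have hreach (y : V) : ∃ k, f^[k] v₀ = y := exists_iterate_eq_of_reflTransGen hb (hsc v₀ y)
  have hdvd_cycle (n : ℕ) (hn : HasCycle E n) : minimalPeriod f v₀ ∣ n := by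
    obtain ⟨y, hy⟩ := hn.exists_isPeriodicPt hb
    obtain ⟨k, rfl⟩ := hreach y
    simpa only [minimalPeriod_apply_iterate hv₀] using hy.minimalPeriod_dvd
  rw [card_eq_minimalPeriod hv₀ hreach]
  exact Nat.dvd_antisymm (hgcd.2 _ hdvd_cycle) (hgcd.1 _ (hasCycle_minimalPeriod hf hv₀))

end Bunches

theorem stmt16_general {V : Type*} [Fintype V] [DecidableEq V] [Nonempty V] {d : ℕ}
    (E : V → Multiset V)
    (hsc : StronglyConnected E)
    (hgcd : CycleGcd E d)
    (f : V → V) (hf : ∀ v, f v ∈ E v) (hperm : Function.Bijective f) :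
    (Fintype.card V = d ∧ ∃ σ : V → V, ∀ v, ∀ x ∈ E v, x = σ v) ∨
    ∃ g : V → V, (∀ v, g v ∈ E v) ∧ UniqueMaxTree g := by
  by_cases hb : ∀ v, ∀ x ∈ E v, x = f v
  · exact Or.inl ⟨card_eq_of_cycleGcd_of_bunches hsc hgcd hf hperm.1 hb, f, hb⟩
  push Not at hb
  obtain ⟨v, u, hu, hne⟩ := hb
  refine Or.inr ⟨update f v u, fun x => ?_,
    uniqueMaxTree_of_range_eq_compl_singleton (range_update_of_bijective hperm hne)⟩
  rcases eq_or_ne x v with rfl | hx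
  · simpa using hu
  · simpa [update_of_ne hx] using hf x

/-- a d-periodic graph with a 1-outregular spanning subgraph
consisting solely of disjoint cycles is either a cycle of bunches of length d or
has another 1-outregular spanning subgraph with exactly one maximal tree. -/
theorem stmt16 {V : Type*} [Fintype V] [DecidableEq V] [Nonempty V] {od d : ℕ}
    (E : V → Multiset V)
    (hsc : StronglyConnected E)
    (hout : ∀ v, (E v).card = od)
    (hgcd : CycleGcd E d)
    (f : V → V) (hf : ∀ v, f v ∈ E v) (hperm : Function.Bijective f) :
    (Fintype.card V = d ∧ ∃ σ : V → V, ∀ v, ∀ x ∈ E v, x = σ v) ∨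
    ∃ g : V → V, (∀ v, g v ∈ E v) ∧ UniqueMaxTree g :=
  stmt16_general E hsc hgcd f hf hperm
end
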